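/- arXiv:1410.5300 — 2 statements merged into one kernel-verified Lean document; each statement's English description precedes it below -/
import Mathlib

section
/- For all integers n ≥ 0 and k ≥ 1, every sequence of real numbers ᾱ = (α₀, α₁, …, α_{n−1}) and all nonzero real numbers ℓ₁, …, ℓ_k, the multiparameter poly-Cauchy numbers of the second kind are expressed through the multiparameter poly-Bernoulli numbers by Ĉ_{n,L}^{(k)}(ᾱ) = Σ_{j=0}^{n} Σ_{m=j}^{n} (−1)^j (s_ᾱ(n,m) s_ᾱ(m,j) / m!) B_{j,ᾱ,L}^{(k)}. -/
/-!
Expanding the integrand through `s_ᾱ(n, m)` and integrating monomials, the left side is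
`∑ₘ s_ᾱ(n, m) (-1)^m (ℓ₁⋯ℓ_k)^(m+1) / (m+1)^k`. On the right, the signs combine to `(-1)^p`
and the orthogonality `∑ⱼ s_ᾱ(m, j) S_ᾱ(j, p) = δ_{mp}` collapses the inner double sum onto
`p = m`. It follows from the opposite relation `S_ᾱ s_ᾱ = 1`, a comparison of coefficients,
since a one-sided inverse of a square (triangular) matrix is two-sided.
-/

open Finset

/-- Iterated integral ∫₀^{ℓ₁}⋯∫₀^{ℓ_k} f(x₁x₂⋯x_k) dx₁⋯dx_k over the list of bounds. -/
noncomputable def iterInt : List ℝ → (ℝ → ℝ) → ℝ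
  | [], f => f 1
  | l :: ls, f => ∫ x in (0:ℝ)..l, iterInt ls (fun y => f (x * y))

theorem iterInt_sum_mul_pow (ls : List ℝ) (N : ℕ) (c : ℕ → ℝ) :
    iterInt ls (fun t => ∑ j ∈ range N, c j * t ^ j) =
      ∑ j ∈ range N, c j * ls.prod ^ (j + 1) / ((j : ℝ) + 1) ^ ls.length := by
  induction ls generalizing c with
  | nil => simp [iterInt]
  | cons l ls ih =>
    have inner (x : ℝ) : iterInt ls (fun y => ∑ j ∈ range N, c j * (x * y) ^ j) =
        ∑ j ∈ range N, c j * ls.prod ^ (j + 1) / ((j : ℝ) + 1) ^ ls.length * x ^ j := by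
      simp_rw [mul_pow, ← mul_assoc, ih]
      exact sum_congr rfl fun j _ => by ring
    simp only [iterInt, inner]
    rw [intervalIntegral.integral_finsetSum fun j _ =>
      Continuous.intervalIntegrable (by fun_prop) 0 l]
    refine sum_congr rfl fun j _ => ?_
    rw [intervalIntegral.integral_const_mul, integral_pow, List.prod_cons, List.length_cons]
    have : ((j : ℝ) + 1) ≠ 0 := by positivity
    field_simp
    ring

theorem sum_range_sum_Icc_comm {M : Type*} [AddCommMonoid M] (n : ℕ) (f : ℕ → ℕ → M) :
    ∑ j ∈ range (n + 1), ∑ m ∈ Icc j n, f j m =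
      ∑ m ∈ range (n + 1), ∑ j ∈ range (m + 1), f j m :=
  sum_comm' fun j m => by simp only [mem_range, mem_Icc]; omega

theorem neg_one_pow_mul_neg_one_pow_sub {R : Type*} [Monoid R] [HasDistribNeg R]
    {p j : ℕ} (h : p ≤ j) : (-1 : R) ^ j * (-1) ^ (j - p) = (-1) ^ p := by
  obtain ⟨d, rfl⟩ := Nat.exists_eq_add_of_le h
  rw [Nat.add_sub_cancel_left, pow_add, mul_assoc, ← pow_add, Even.neg_one_pow ⟨d, rfl⟩, mul_one]

theorem coeff_eq_of_forall_sum_mul_pow_eq {R : Type*} [CommRing R] [IsDomain R] [Infinite R]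
    {N : ℕ} {d e : ℕ → R}
    (h : ∀ x : R, ∑ j ∈ range N, d j * x ^ j = ∑ j ∈ range N, e j * x ^ j) :
    ∀ j < N, d j = e j := by
  intro j hj
  have hp : ∑ i ∈ range N, Polynomial.C (d i) * Polynomial.X ^ i =
      ∑ i ∈ range N, Polynomial.C (e i) * Polynomial.X ^ i :=
    Polynomial.funext fun x => by simpa [Polynomial.eval_finsetSum] using h x
  simpa [Polynomial.finsetSum_coeff, Polynomial.coeff_C_mul, Polynomial.coeff_X_pow, hj]
    using congrArg (Polynomial.coeff · j) hp

section LowerTriangular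

variable {R : Type*} [CommRing R] (n : ℕ)

/-- The identities defining `s_ᾱ` and `S_ᾱ` leave their entries above the diagonal free,
so these are replaced by `0`. -/
def truncLower (a : ℕ → ℕ → R) : Matrix (Fin (n + 1)) (Fin (n + 1)) R :=
  Matrix.of fun i j => if (j : ℕ) ≤ i then a i j else 0

theorem truncLower_mul_apply (a b : ℕ → ℕ → R) (i j : Fin (n + 1)) :
    (truncLower n a * truncLower n b) i j = ∑ l ∈ Icc (j : ℕ) i, a i l * b l j := by
  have hterm (l : Fin (n + 1)) : truncLower n a i l * truncLower n b l j =
      if (j : ℕ) ≤ l ∧ (l : ℕ) ≤ i then a i l * b l j else 0 := by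
    simp only [truncLower, Matrix.of_apply]
    split_ifs <;> simp_all
  have hfilter : (range (n + 1)).filter (fun l => (j : ℕ) ≤ l ∧ l ≤ i) = Icc (j : ℕ) i := by
    ext l
    simp only [mem_filter, mem_range, mem_Icc]
    omega
  rw [Matrix.mul_apply, sum_congr rfl fun l _ => hterm l,
    Fin.sum_univ_eq_sum_range (fun l => if (j : ℕ) ≤ l ∧ l ≤ i then a i l * b l j else 0),
    ← sum_filter, hfilter]

theorem truncLower_mul_eq_one_iff (a b : ℕ → ℕ → R) :
    truncLower n a * truncLower n b = 1 ↔
      ∀ i ≤ n, ∀ j ≤ i, ∑ l ∈ Icc j i, a i l * b l j = if j = i then 1 else 0 := by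
  simp only [← Matrix.ext_iff, truncLower_mul_apply, Matrix.one_apply, Fin.forall_iff,
    Fin.ext_iff, Nat.lt_succ_iff]
  simp only [@eq_comm _ (_ : ℕ) (_ : ℕ)]
  refine ⟨fun h i hi j hj => h i hi j (hj.trans hi), fun h i hi j hj => ?_⟩
  rcases le_or_gt j i with hji | hij
  · exact h i hi j hji
  · simp [Icc_eq_empty_of_lt hij, hij.ne]

theorem sum_Icc_mul_eq_ite_comm {a b : ℕ → ℕ → R}
    (h : ∀ i ≤ n, ∀ j ≤ i, ∑ l ∈ Icc j i, a i l * b l j = if j = i then 1 else 0) :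
    ∀ i ≤ n, ∀ j ≤ i, ∑ l ∈ Icc j i, b i l * a l j = if j = i then 1 else 0 := by
  rw [← truncLower_mul_eq_one_iff] at h ⊢
  exact mul_eq_one_comm.mp h

end LowerTriangular

section Stirling

variable {R : Type*} [CommRing R] [IsDomain R] [Infinite R] {n : ℕ} {α : ℕ → R}
  {s S : ℕ → ℕ → R}

theorem sum_Icc_stirling2_mul_stirling1
    (hs : ∀ m ≤ n, ∀ x : R, ∏ i ∈ range m, (x - α i) = ∑ j ∈ range (m + 1), s m j * x ^ j)
    (hS : ∀ p ≤ n, ∀ x : R, x ^ p = ∑ m ∈ range (p + 1), S p m * ∏ i ∈ range m, (x - α i)) :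
    ∀ q ≤ n, ∀ j ≤ q, ∑ m ∈ Icc j q, S q m * s m j = if j = q then 1 else 0 := by
  intro q hq
  refine fun j hj => coeff_eq_of_forall_sum_mul_pow_eq (d := fun j => ∑ m ∈ Icc j q, S q m * s m j)
    (e := fun j => if j = q then 1 else 0) (fun x => ?_) j (Nat.lt_succ_of_le hj)
  calc ∑ j ∈ range (q + 1), (∑ m ∈ Icc j q, S q m * s m j) * x ^ j
      = ∑ m ∈ range (q + 1), ∑ j ∈ range (m + 1), S q m * (s m j * x ^ j) := by
        simp_rw [sum_mul, mul_assoc]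
        exact sum_range_sum_Icc_comm q _
    _ = x ^ q := by
        rw [hS q hq x]
        refine sum_congr rfl fun m hm => ?_
        rw [← mul_sum, hs m ((Nat.lt_succ_iff.mp (mem_range.mp hm)).trans hq) x]
    _ = ∑ j ∈ range (q + 1), (if j = q then 1 else 0) * x ^ j := by
        simp [ite_mul]

theorem sum_Icc_stirling1_mul_stirling2
    (hs : ∀ m ≤ n, ∀ x : R, ∏ i ∈ range m, (x - α i) = ∑ j ∈ range (m + 1), s m j * x ^ j)
    (hS : ∀ p ≤ n, ∀ x : R, x ^ p = ∑ m ∈ range (p + 1), S p m * ∏ i ∈ range m, (x - α i)) :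
    ∀ m ≤ n, ∀ p ≤ m, ∑ j ∈ Icc p m, s m j * S j p = if p = m then 1 else 0 :=
  sum_Icc_mul_eq_ite_comm n (sum_Icc_stirling2_mul_stirling1 hs hS)

end Stirling

theorem sum_range_mul_sum_range_eq_of_sum_Icc_mul {R : Type*} [CommRing R]
    {a b : ℕ → ℕ → R} {m : ℕ}
    (h : ∀ p ≤ m, ∑ j ∈ Icc p m, a m j * b j p = if p = m then 1 else 0) (f : ℕ → R) :
    ∑ j ∈ range (m + 1), a m j * ∑ p ∈ range (j + 1), b j p * f p = f m := by
  simp_rw [mul_sum, ← sum_range_sum_Icc_comm m, ← mul_assoc, ← sum_mul]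
  rw [sum_congr rfl fun p hp => by rw [h p (Nat.lt_succ_iff.mp (mem_range.mp hp))]]
  simp

theorem stmt10_general (n k : ℕ) (α : ℕ → ℝ) (L : Fin k → ℝ)
    (s : ℕ → ℕ → ℝ) (S : ℕ → ℕ → ℝ)
    (hs : ∀ m ≤ n, ∀ x : ℝ,
      ∏ i ∈ range m, (x - α i) = ∑ j ∈ range (m + 1), s m j * x ^ j)
    (hS : ∀ p ≤ n, ∀ x : ℝ,
      x ^ p = ∑ m ∈ range (p + 1), S p m * ∏ i ∈ range m, (x - α i)) :
    iterInt (List.ofFn L) (fun t => ∏ i ∈ range n, (-t - α i)) =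
      ∑ j ∈ range (n + 1), ∑ m ∈ Icc j n,
        (-1 : ℝ) ^ j * (s n m * s m j / (m.factorial : ℝ)) *
          (∑ p ∈ range (j + 1),
            (-1 : ℝ) ^ (j - p) * (p.factorial : ℝ) * S j p *
              (∏ i, L i) ^ (p + 1) / ((p : ℝ) + 1) ^ k) := by
  set c : ℕ → ℝ := fun p => (∏ i, L i) ^ (p + 1) / ((p : ℝ) + 1) ^ k
  have integrand : (fun t : ℝ => ∏ i ∈ range n, (-t - α i)) =
      fun t => ∑ m ∈ range (n + 1), (s n m * (-1) ^ m) * t ^ m := by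
    funext t
    rw [hs n le_rfl (-t)]
    exact sum_congr rfl fun m _ => by rw [neg_pow]; ring
  rw [integrand, iterInt_sum_mul_pow, List.prod_ofFn, List.length_ofFn, sum_range_sum_Icc_comm]
  refine sum_congr rfl fun m hm => ?_
  have inversion := sum_range_mul_sum_range_eq_of_sum_Icc_mul
    (sum_Icc_stirling1_mul_stirling2 hs hS m (Nat.lt_succ_iff.mp (mem_range.mp hm)))
    (fun p => (-1) ^ p * p.factorial * c p)
  have hm! : (m.factorial : ℝ) ≠ 0 := by positivity
  calc s n m * (-1) ^ m * (∏ i, L i) ^ (m + 1) / ((m : ℝ) + 1) ^ k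
      = s n m / m.factorial * ((-1) ^ m * m.factorial * c m) := by
        simp only [c]
        field_simp
    _ = _ := by
      rw [← inversion, mul_sum]
      refine sum_congr rfl fun j hj => ?_
      simp_rw [mul_sum, mul_div_assoc]
      refine sum_congr rfl fun p hp => ?_
      rw [← neg_one_pow_mul_neg_one_pow_sub (Nat.lt_succ_iff.mp (mem_range.mp hp))]
      ring

theorem stmt10 (n k : ℕ) (hk : 1 ≤ k) (α : ℕ → ℝ) (L : Fin k → ℝ)
    (hL : ∀ i, L i ≠ 0) (s : ℕ → ℕ → ℝ) (S : ℕ → ℕ → ℝ)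
    (hs : ∀ m ≤ n, ∀ x : ℝ,
      ∏ i ∈ range m, (x - α i) = ∑ j ∈ range (m + 1), s m j * x ^ j)
    (hS : ∀ p ≤ n, ∀ x : ℝ,
      x ^ p = ∑ m ∈ range (p + 1), S p m * ∏ i ∈ range m, (x - α i)) :
    iterInt (List.ofFn L) (fun t => ∏ i ∈ range n, (-t - α i)) =
      ∑ j ∈ range (n + 1), ∑ m ∈ Icc j n,
        (-1 : ℝ) ^ j * (s n m * s m j / (m.factorial : ℝ)) *
          (∑ p ∈ range (j + 1),
            (-1 : ℝ) ^ (j - p) * (p.factorial : ℝ) * S j p *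
              (∏ i, L i) ^ (p + 1) / ((p : ℝ) + 1) ^ k) :=
  stmt10_general n k α L s S hs hS
end

section
/- For all integers n ≥ 0 and k ≥ 1, every sequence of real numbers ᾱ = (α₀, α₁, …, α_{n−1}), all nonzero real numbers ℓ₁, …, ℓ_k, and every real number z, the multiparameter poly-Bernoulli polynomials are expressed through the multiparameter poly-Cauchy polynomials of the first kind by B_{n,ᾱ,L}^{(k)}(z) = Σ_{j=0}^{n} Σ_{m=j}^{n} (−1)^{n−m} m! S_ᾱ(n,m) S_ᾱ(m,j) C_{j,L}^{(k)}(z;ᾱ). -/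
/-
Write `A = ℓ₁⋯ℓ_k`. Integrating a monomial `t ^ p` over the box gives `A ^ (p + 1) / (p + 1) ^ k`,
so on polynomials the iterated integral is a linear functional. By the defining relation of
`S_ᾱ`, applied at `t - z`, the combination `∑ⱼ S_ᾱ(m, j) ∏_{i<j} (t - αᵢ - z)` is the polynomial
`(t - z) ^ m`; hence, after exchanging the sums over `j` and `m`, the right-hand side becomes
`∑ₘ (-1) ^ (n - m) m! S_ᾱ(n, m)` times the integral of `(t - z) ^ m`, and the binomial expansion
of that integral is the inner sum of the poly-Bernoulli polynomial.
-/

open Finset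

open Polynomial

lemma iterInt_sum_mul_pow_s16 {ι : Type*} (l : List ℝ) (s : Finset ι) (c : ι → ℝ) (e : ι → ℕ) :
    iterInt l (fun t => ∑ i ∈ s, c i * t ^ e i)
      = ∑ i ∈ s, c i * l.prod ^ (e i + 1) / ((e i : ℝ) + 1) ^ l.length := by
  induction l generalizing c with
  | nil => simp [iterInt]
  | cons a ls ih =>
    have inner (x : ℝ) : iterInt ls (fun y => ∑ i ∈ s, c i * (x * y) ^ e i)
        = ∑ i ∈ s, c i * ls.prod ^ (e i + 1) / ((e i : ℝ) + 1) ^ ls.length * x ^ e i := by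
      simp_rw [mul_pow, ← mul_assoc, ih (fun i => c i * x ^ e i)]
      exact sum_congr rfl fun i _ => by ring
    simp only [iterInt, inner]
    rw [intervalIntegral.integral_finsetSum fun i _ =>
      (by fun_prop : Continuous _).intervalIntegrable _ _]
    refine sum_congr rfl fun i _ => ?_
    rw [intervalIntegral.integral_const_mul, integral_pow, List.prod_cons, List.length_cons]
    field_simp
    ring

noncomputable def iterIntPoly (l : List ℝ) : ℝ[X] →ₗ[ℝ] ℝ :=
  lsum fun p => (l.prod ^ (p + 1) / ((p : ℝ) + 1) ^ l.length) • LinearMap.id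

lemma iterInt_eval (l : List ℝ) (q : ℝ[X]) : iterInt l (fun t => q.eval t) = iterIntPoly l q := by
  simp only [eval_eq_sum, sum_def, iterInt_sum_mul_pow_s16, iterIntPoly, lsum_apply,
    LinearMap.smul_apply, LinearMap.id_apply, smul_eq_mul]
  exact sum_congr rfl fun p _ => by ring

lemma iterInt_sub_pow (l : List ℝ) (z : ℝ) (m : ℕ) :
    iterInt l (fun t => (t - z) ^ m)
      = ∑ i ∈ range (m + 1), (m.choose i : ℝ) * l.prod ^ (m - i + 1)
          / (((m - i : ℕ) : ℝ) + 1) ^ l.length * (-z) ^ i := by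
  have binomial (t : ℝ) :
      (t - z) ^ m = ∑ i ∈ range (m + 1), (-z) ^ i * (m.choose i : ℝ) * t ^ (m - i) := by
    rw [sub_eq_neg_add, add_pow]
    exact sum_congr rfl fun i _ => by ring
  simp only [binomial, iterInt_sum_mul_pow_s16]
  exact sum_congr rfl fun i _ => by ring

lemma sum_mul_prod_sub_eq_sub_pow (α : ℕ → ℝ) (m : ℕ) (s : ℕ → ℝ)
    (hs : ∀ x : ℝ, x ^ m = ∑ j ∈ range (m + 1), s j * ∏ i ∈ range j, (x - α i)) (z : ℝ) :
    ∑ j ∈ range (m + 1), s j • ∏ i ∈ range j, (X - C (α i + z)) = (X - C z) ^ m := by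
  refine Polynomial.funext fun t => ?_
  simp only [eval_finsetSum, eval_smul, eval_prod, eval_sub, eval_X, eval_C, eval_pow, smul_eq_mul,
    hs (t - z), sub_add_eq_sub_sub_swap]

lemma sum_mul_iterInt_prod (l : List ℝ) (α : ℕ → ℝ) (m : ℕ) (s : ℕ → ℝ)
    (hs : ∀ x : ℝ, x ^ m = ∑ j ∈ range (m + 1), s j * ∏ i ∈ range j, (x - α i)) (z : ℝ) :
    ∑ j ∈ range (m + 1), s j * iterInt l (fun t => ∏ i ∈ range j, (t - α i - z))
      = iterInt l (fun t => (t - z) ^ m) := by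
  have eval_prod_eq (j : ℕ) (t : ℝ) :
      ∏ i ∈ range j, (t - α i - z) = (∏ i ∈ range j, (X - C (α i + z))).eval t := by
    simp only [eval_prod, eval_sub, eval_X, eval_C, sub_sub]
  have eval_pow_eq (t : ℝ) : (t - z) ^ m = ((X - C z) ^ m).eval t := by simp
  simp only [eval_prod_eq, eval_pow_eq, iterInt_eval, ← sum_mul_prod_sub_eq_sub_pow α m s hs z,
    map_sum, map_smul, smul_eq_mul]

theorem stmt16_general (n k : ℕ) (α : ℕ → ℝ) (L : Fin k → ℝ)
    (z : ℝ) (S : ℕ → ℕ → ℝ)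
    (hS : ∀ p ≤ n, ∀ x : ℝ,
      x ^ p = ∑ m ∈ range (p + 1), S p m * ∏ i ∈ range m, (x - α i)) :
    (-1 : ℝ) ^ n * ∑ i ∈ range (n + 1), ∑ m ∈ Icc i n,
        (-1 : ℝ) ^ m * (m.factorial : ℝ) * (m.choose i : ℝ) * S n m *
          (∏ j, L j) ^ (m - i + 1) / (((m - i : ℕ) : ℝ) + 1) ^ k * (-z) ^ i =
      ∑ j ∈ range (n + 1), ∑ m ∈ Icc j n,
        (-1 : ℝ) ^ (n - m) * (m.factorial : ℝ) * S n m * S m j *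
          iterInt (List.ofFn L) (fun t => ∏ i ∈ range j, (t - α i - z)) := by
  have triangle (i m : ℕ) :
      i ∈ range (n + 1) ∧ m ∈ Icc i n ↔ i ∈ range (m + 1) ∧ m ∈ range (n + 1) := by
    simp only [mem_range, mem_Icc]; omega
  rw [sum_comm' triangle, sum_comm' triangle, mul_sum]
  refine sum_congr rfl fun m hm => ?_
  have hmn : m ≤ n := Nat.lt_succ_iff.mp (mem_range.mp hm)
  have inner := sum_mul_iterInt_prod (List.ofFn L) α m (S m) (hS m hmn) z
  rw [iterInt_sub_pow, List.prod_ofFn, List.length_ofFn] at inner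
  simp_rw [mul_assoc _ (S m _), ← mul_sum, inner, mul_sum, pow_sub₀ (-1 : ℝ) (by norm_num) hmn,
    ← inv_pow, inv_neg_one]
  exact sum_congr rfl fun i _ => by ring

theorem stmt16 (n k : ℕ) (hk : 1 ≤ k) (α : ℕ → ℝ) (L : Fin k → ℝ)
    (hL : ∀ i, L i ≠ 0) (z : ℝ) (S : ℕ → ℕ → ℝ)
    (hS : ∀ p ≤ n, ∀ x : ℝ,
      x ^ p = ∑ m ∈ range (p + 1), S p m * ∏ i ∈ range m, (x - α i)) :
    (-1 : ℝ) ^ n * ∑ i ∈ range (n + 1), ∑ m ∈ Icc i n,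
        (-1 : ℝ) ^ m * (m.factorial : ℝ) * (m.choose i : ℝ) * S n m *
          (∏ j, L j) ^ (m - i + 1) / (((m - i : ℕ) : ℝ) + 1) ^ k * (-z) ^ i =
      ∑ j ∈ range (n + 1), ∑ m ∈ Icc j n,
        (-1 : ℝ) ^ (n - m) * (m.factorial : ℝ) * S n m * S m j *
          iterInt (List.ofFn L) (fun t => ∏ i ∈ range j, (t - α i - z)) :=
  stmt16_general n k α L z S hS
end
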